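/- Let η₀, η₁ : S¹ → ℝ^d be H²-regular closed curves with constant-speed parametrization (|∂_s η(s)| = L(η) for all s, where L is the length) and mean zero, normalized so that ‖η₀ − η₁‖_{L²(S¹)} = 1. Then any C¹ path η : [0,1] → A with η(0)=η₀, η(1)=η₁ staying in the manifold A of constant-speed closed curves has Riemannian length ∫₀¹ ‖∂_t η(t)‖_{L²(S¹)} √(L(η(t))) dt at least m := (1/2)·min(L(η₀), ‖η₀‖²_{L²(S¹)}, 2). In particular the induced Riemannian distance on A is non-degenerate. -/

import Mathlib

/-!
Along the path follow `H(t) = ‖η(t)‖²_{L²}` and the length `L(t) = L(η(t))`. A mean-zero closed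
curve of constant speed `L` stays within `L/2` of the origin, so `H ≤ L²/4`, and by
Cauchy–Schwarz `|d/dt ‖η(t) - c‖²_{L²}| ≤ 2 ‖η(t) - c‖_{L²} ‖∂ₜη‖_{L²}` for every fixed curve `c`.

If `L ≥ m` along the path, the Riemannian length is at least `√m` times the `L²`-length of the
path, which is at least `‖η₁ - η₀‖_{L²} = 1`. Otherwise `L(t₀) < m` for some `t₀`, so
`H(t₀) ≤ m²/4` while `H(0) ≥ 2m`. As `|d/dt H^{3/4}| ≤ (3/2) H^{1/4} ‖∂ₜη‖ ≤ (3/(2√2)) √L ‖∂ₜη‖`,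
the Riemannian length is at least `(2√2/3) (H(0)^{3/4} - H(t₀)^{3/4})`, and this exceeds `m`
because `m ≤ 1`.
-/

open Real MeasureTheory intervalIntegral

noncomputable section

open Set Filter Topology
open scoped RealInnerProductSpace

theorem abs_rpow_sub_rpow_le_integral {H P g : ℝ → ℝ} {a b p : ℝ} (hab : a ≤ b)
    (hp : 1 / 2 ≤ p) (hH : ∀ t, HasDerivAt H (P t) t) (hP : Continuous P) (hg : Continuous g)
    (hH0 : ∀ t, 0 ≤ H t) (hg0 : ∀ t, 0 ≤ g t)
    (hPg : ∀ t ∈ Icc a b, |P t| ≤ 2 * √(H t) * g t) :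
    |H b ^ p - H a ^ p| ≤ 2 * p * ∫ t in a..b, H t ^ (p - 1 / 2) * g t := by
  have hHc : Continuous H := continuous_iff_continuousAt.2 fun t => (hH t).continuousAt
  have hrpow_p := continuous_rpow_const (by linarith : 0 ≤ p)
  have hrpow_p' := continuous_rpow_const (by linarith : 0 ≤ p - 1 / 2)
  -- `H ^ p` need not be differentiable where `H` vanishes, so shift `H` by `ε > 0` first.
  have hshift (ε : ℝ) (hε : 0 < ε) : |(H b + ε) ^ p - (H a + ε) ^ p| ≤
      2 * p * ∫ t in a..b, (H t + ε) ^ (p - 1 / 2) * g t := by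
    have hpos (t : ℝ) : 0 < H t + ε := by linarith [hH0 t]
    have hderiv (t : ℝ) : HasDerivAt (fun t => (H t + ε) ^ p)
        (P t * p * (H t + ε) ^ (p - 1)) t :=
      ((hH t).add_const ε).rpow_const (Or.inl (hpos t).ne')
    have hderiv_cont : Continuous fun t => P t * p * (H t + ε) ^ (p - 1) :=
      (hP.mul continuous_const).mul
        ((hHc.add continuous_const).rpow_const fun t => Or.inl (hpos t).ne')
    rw [← integral_eq_sub_of_hasDerivAt (fun t _ => hderiv t) (hderiv_cont.intervalIntegrable _ _),
      ← intervalIntegral.integral_const_mul]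
    refine (abs_integral_le_integral_abs hab).trans (integral_mono_on hab
      (hderiv_cont.abs.intervalIntegrable _ _) (Continuous.intervalIntegrable (by fun_prop) _ _)
      fun t ht => ?_)
    have hsqrt : √(H t) ≤ (H t + ε) ^ (1 / 2 : ℝ) := by
      rw [← sqrt_eq_rpow]; exact sqrt_le_sqrt (by linarith)
    calc |P t * p * (H t + ε) ^ (p - 1)| = |P t| * p * (H t + ε) ^ (p - 1) := by
          rw [abs_mul, abs_mul, abs_of_nonneg (by linarith : 0 ≤ p),
            abs_of_nonneg (rpow_nonneg (hpos t).le _)]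
      _ ≤ 2 * (H t + ε) ^ (1 / 2 : ℝ) * g t * p * (H t + ε) ^ (p - 1) := by
          gcongr
          · exact rpow_nonneg (hpos t).le _
          · exact (hPg t ht).trans (mul_le_mul_of_nonneg_right (by linarith) (hg0 t))
      _ = 2 * p * ((H t + ε) ^ (p - 1 / 2) * g t) := by
          rw [show p - 1 / 2 = 1 / 2 + (p - 1) by ring, rpow_add (hpos t)]; ring
  have hlhs : Continuous fun ε => |(H b + ε) ^ p - (H a + ε) ^ p| := by fun_prop
  have hrhs : Continuous fun ε => 2 * p * ∫ t in a..b, (H t + ε) ^ (p - 1 / 2) * g t :=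
    continuous_const.mul (continuous_parametric_intervalIntegral_of_continuous'
      (f := fun ε t => (H t + ε) ^ (p - 1 / 2) * g t) (by fun_prop) a b)
  simpa using le_of_tendsto_of_tendsto ((hlhs.tendsto 0).mono_left nhdsWithin_le_nhds)
    ((hrhs.tendsto 0).mono_left nhdsWithin_le_nhds)
    (eventually_nhdsWithin_of_forall (s := Ioi 0) hshift)

theorem mul_le_sqrt_two_mul_rpow_sub_rpow {m x y : ℝ} (hm0 : 0 ≤ m) (hm1 : m ≤ 1)
    (hx : 2 * m ≤ x) (hy0 : 0 ≤ y) (hy : y ≤ m ^ 2 / 4) :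
    3 / 2 * m ≤ √2 * (x ^ (3 / 4 : ℝ) - y ^ (3 / 4 : ℝ)) := by
  have hsqrt2 : √2 * √2 = 2 := mul_self_sqrt zero_le_two
  have hm : m ≤ m ^ (3 / 4 : ℝ) := by
    simpa using rpow_le_rpow_of_exponent_ge' hm0 hm1 (by norm_num) (by norm_num : (3 / 4 : ℝ) ≤ 1)
  have hx' : √2 * m ^ (3 / 4 : ℝ) ≤ x ^ (3 / 4 : ℝ) :=
    calc √2 * m ^ (3 / 4 : ℝ) ≤ 2 ^ (3 / 4 : ℝ) * m ^ (3 / 4 : ℝ) := by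
          gcongr
          rw [sqrt_eq_rpow]
          exact rpow_le_rpow_of_exponent_le one_le_two (by norm_num)
      _ ≤ x ^ (3 / 4 : ℝ) := by
          rw [← mul_rpow zero_le_two hm0]; gcongr
  have hy' : 2 * √2 * y ^ (3 / 4 : ℝ) ≤ m ^ (3 / 4 : ℝ) :=
    calc 2 * √2 * y ^ (3 / 4 : ℝ) = (2 ^ (2 : ℝ)) ^ (3 / 4 : ℝ) * y ^ (3 / 4 : ℝ) := by
          rw [← rpow_mul zero_le_two, show (2 : ℝ) * (3 / 4) = 1 + 1 / 2 by norm_num,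
            rpow_add two_pos, rpow_one, sqrt_eq_rpow]
      _ ≤ m ^ (3 / 4 : ℝ) := by
          rw [← mul_rpow (by positivity) hy0]
          gcongr
          norm_num
          nlinarith
  nlinarith [rpow_nonneg hm0 (3 / 4 : ℝ), sqrt_nonneg 2]

theorem le_integral_mul_sqrt_of_forall_le {g Λ : ℝ → ℝ} {m : ℝ} (hm : m ≤ 1)
    (hg : Continuous g) (hg0 : ∀ t, 0 ≤ g t) (hΛ : Continuous Λ)
    (hmΛ : ∀ t ∈ Icc (0 : ℝ) 1, m ≤ Λ t) (hg1 : 1 ≤ ∫ t in (0 : ℝ)..1, g t) :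
    m ≤ ∫ t in (0 : ℝ)..1, g t * √(Λ t) := by
  rcases le_or_gt m 0 with hm0 | hm0
  · exact hm0.trans (integral_nonneg zero_le_one fun t _ => mul_nonneg (hg0 t) (sqrt_nonneg _))
  calc m ≤ √m := by
        rw [le_sqrt hm0.le hm0.le]; nlinarith
    _ ≤ √m * ∫ t in (0 : ℝ)..1, g t := le_mul_of_one_le_right (sqrt_nonneg m) hg1
    _ = ∫ t in (0 : ℝ)..1, g t * √m := by
        rw [intervalIntegral.integral_mul_const, mul_comm]
    _ ≤ ∫ t in (0 : ℝ)..1, g t * √(Λ t) :=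
        integral_mono_on zero_le_one ((hg.mul continuous_const).intervalIntegrable _ _)
          ((hg.mul hΛ.sqrt).intervalIntegrable _ _) fun t ht =>
            mul_le_mul_of_nonneg_left (sqrt_le_sqrt (hmΛ t ht)) (hg0 t)

theorem sqrt_two_mul_integral_rpow_mul_le {H g Λ : ℝ → ℝ} {t₀ : ℝ} (ht₀ : t₀ ∈ Icc (0 : ℝ) 1)
    (hH : Continuous H) (hg : Continuous g) (hΛ : Continuous Λ) (hH0 : ∀ t, 0 ≤ H t)
    (hg0 : ∀ t, 0 ≤ g t) (hΛ0 : ∀ t, 0 ≤ Λ t) (hHΛ : ∀ t ∈ Icc (0 : ℝ) 1, H t ≤ (Λ t / 2) ^ 2) :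
    √2 * ∫ t in (0 : ℝ)..t₀, H t ^ (1 / 4 : ℝ) * g t ≤ ∫ t in (0 : ℝ)..1, g t * √(Λ t) := by
  have hH4 : Continuous fun t => H t ^ (1 / 4 : ℝ) := hH.rpow_const fun _ => Or.inr (by norm_num)
  rw [← intervalIntegral.integral_const_mul]
  calc ∫ t in (0 : ℝ)..t₀, √2 * (H t ^ (1 / 4 : ℝ) * g t)
      ≤ ∫ t in (0 : ℝ)..t₀, g t * √(Λ t) := by
        refine integral_mono_on ht₀.1 ((continuous_const.mul (hH4.mul hg)).intervalIntegrable _ _)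
          ((hg.mul hΛ.sqrt).intervalIntegrable _ _) fun t ht => ?_
        have htI : t ∈ Icc (0 : ℝ) 1 := ⟨ht.1, ht.2.trans ht₀.2⟩
        have hroot : √2 * H t ^ (1 / 4 : ℝ) ≤ √(Λ t) :=
          calc √2 * H t ^ (1 / 4 : ℝ) ≤ √2 * ((Λ t / 2) ^ 2) ^ (1 / 4 : ℝ) := by
                gcongr; exacts [hH0 t, hHΛ t htI]
            _ = √(Λ t) := by
                rw [← rpow_natCast, ← rpow_mul (by linarith [hΛ0 t])]
                norm_num
                rw [← sqrt_eq_rpow, sqrt_div (hΛ0 t)]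
                field_simp
        nlinarith [hg0 t]
    _ ≤ ∫ t in (0 : ℝ)..1, g t * √(Λ t) :=
        integral_mono_interval le_rfl ht₀.1 ht₀.2
          (.of_forall fun t => mul_nonneg (hg0 t) (sqrt_nonneg _))
          ((hg.mul hΛ.sqrt).intervalIntegrable _ _)

section VectorValued

variable {E : Type*} [NormedAddCommGroup E]

def sqNormL2 (f : ℝ → E) : ℝ :=
  ∫ s in (0 : ℝ)..1, ‖f s‖ ^ 2

def curveLength [NormedSpace ℝ E] (γ : ℝ → E) : ℝ :=
  ∫ s in (0 : ℝ)..1, ‖deriv γ s‖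

def riemannianLength [NormedSpace ℝ E] (η : ℝ → ℝ → E) : ℝ :=
  ∫ t in (0 : ℝ)..1, √(sqNormL2 fun s => deriv (fun u => η u s) t) * √(curveLength (η t))

theorem sqNormL2_nonneg (f : ℝ → E) : 0 ≤ sqNormL2 f :=
  integral_nonneg zero_le_one fun _ _ => sq_nonneg _

theorem continuous_sqNormL2 {η : ℝ → ℝ → E} (hη : Continuous fun p : ℝ × ℝ => η p.1 p.2) :
    Continuous fun t => sqNormL2 (η t) :=
  continuous_parametric_intervalIntegral_of_continuous' (hη.norm.pow 2) 0 1

section NormedSpace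

variable [NormedSpace ℝ E]

theorem hasDerivAt_intervalIntegral_of_continuous [CompleteSpace E] {φ ψ : ℝ → ℝ → E}
    (hφ : Continuous fun p : ℝ × ℝ => φ p.1 p.2) (hψ : Continuous fun p : ℝ × ℝ => ψ p.1 p.2)
    (hd : ∀ t s, HasDerivAt (fun u => φ u s) (ψ t s) t) (a b t₀ : ℝ) :
    HasDerivAt (fun t => ∫ s in a..b, φ t s) (∫ s in a..b, ψ t₀ s) t₀ := by
  obtain ⟨C, hC⟩ := ((isCompact_closedBall t₀ 1).prod isCompact_uIcc).exists_bound_of_continuousOn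
    hψ.continuousOn
  refine (hasDerivAt_integral_of_dominated_loc_of_deriv_le (bound := fun _ => C)
    (Metric.closedBall_mem_nhds t₀ zero_lt_one)
    (.of_forall fun t => (hφ.uncurry_left t).aestronglyMeasurable)
    ((hφ.uncurry_left t₀).intervalIntegrable _ _)
    (hψ.uncurry_left t₀).aestronglyMeasurable
    (.of_forall fun s hs t ht => hC (t, s) ⟨ht, uIoc_subset_uIcc hs⟩)
    intervalIntegrable_const (.of_forall fun s _ t _ => hd t s)).2

theorem norm_le_half_of_periodic_of_integral_eq_zero [CompleteSpace E] {γ : ℝ → E} {Λ : ℝ}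
    (hγ : Differentiable ℝ γ) (hper : Function.Periodic γ 1)
    (hmean : ∫ σ in (0 : ℝ)..1, γ σ = 0) (hbound : ∀ σ, ‖deriv γ σ‖ ≤ Λ) (s : ℝ) :
    ‖γ s‖ ≤ Λ / 2 := by
  have hΛ : 0 ≤ Λ := (norm_nonneg _).trans (hbound 0)
  -- By periodicity `γ σ = γ (σ - k)` with `k = round (σ - s)`, and `|σ - k - s| ≤ 1/2`.
  have hdist (σ : ℝ) : ‖γ s - γ σ‖ ≤ Λ / 2 := by
    have hk := abs_sub_round (σ - s)
    calc ‖γ s - γ σ‖ = ‖γ (σ - round (σ - s)) - γ s‖ := by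
          rw [norm_sub_rev, ← mul_one (round (σ - s) : ℝ), hper.sub_int_mul_eq]
      _ ≤ Λ * ‖σ - round (σ - s) - s‖ :=
          convex_univ.norm_image_sub_le_of_norm_deriv_le (fun x _ => hγ x)
            (fun x _ => hbound x) trivial trivial
      _ ≤ Λ * (1 / 2) := by
          rw [Real.norm_eq_abs, sub_right_comm]
          exact mul_le_mul_of_nonneg_left hk hΛ
      _ = Λ / 2 := by ring
  have hγs : γ s = ∫ σ in (0 : ℝ)..1, (γ s - γ σ) := by
    rw [integral_sub intervalIntegrable_const (hγ.continuous.intervalIntegrable _ _), hmean]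
    simp
  calc ‖γ s‖ = ‖∫ σ in (0 : ℝ)..1, (γ s - γ σ)‖ := congrArg _ hγs
    _ ≤ ∫ σ in (0 : ℝ)..1, ‖γ s - γ σ‖ := norm_integral_le_integral_norm zero_le_one
    _ ≤ ∫ σ in (0 : ℝ)..1, Λ / 2 :=
        integral_mono_on zero_le_one
          ((continuous_const.sub hγ.continuous).norm.intervalIntegrable _ _)
          intervalIntegrable_const fun σ _ => hdist σ
    _ = Λ / 2 := by simp

variable {f : ℝ → ℝ → E}

theorem hasDerivAt_fderiv_apply_fst (hf : Differentiable ℝ (fun p : ℝ × ℝ => f p.1 p.2))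
    (t s : ℝ) :
    HasDerivAt (fun u => f u s) (fderiv ℝ (fun p : ℝ × ℝ => f p.1 p.2) (t, s) (1, 0)) t :=
  (hf (t, s)).hasFDerivAt.comp_hasDerivAt (f := fun u => (u, s)) t
    ((hasDerivAt_id t).prodMk (hasDerivAt_const t s))

theorem hasDerivAt_fderiv_apply_snd (hf : Differentiable ℝ (fun p : ℝ × ℝ => f p.1 p.2))
    (t s : ℝ) :
    HasDerivAt (f t) (fderiv ℝ (fun p : ℝ × ℝ => f p.1 p.2) (t, s) (0, 1)) s :=
  (hf (t, s)).hasFDerivAt.comp_hasDerivAt (f := fun σ => (t, σ)) s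
    ((hasDerivAt_const s t).prodMk (hasDerivAt_id s))

theorem continuous_deriv_fst (hf : ContDiff ℝ 1 (fun p : ℝ × ℝ => f p.1 p.2)) :
    Continuous fun p : ℝ × ℝ => deriv (fun u => f u p.2) p.1 := by
  simp_rw [(hasDerivAt_fderiv_apply_fst (hf.differentiable one_ne_zero) _ _).deriv]
  exact (hf.continuous_fderiv one_ne_zero).clm_apply continuous_const

theorem continuous_deriv_snd (hf : ContDiff ℝ 1 (fun p : ℝ × ℝ => f p.1 p.2)) :
    Continuous fun p : ℝ × ℝ => deriv (f p.1) p.2 := by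
  simp_rw [(hasDerivAt_fderiv_apply_snd (hf.differentiable one_ne_zero) _ _).deriv]
  exact (hf.continuous_fderiv one_ne_zero).clm_apply continuous_const

theorem continuous_sqNormL2_deriv_fst {η : ℝ → ℝ → E}
    (hη : ContDiff ℝ 1 fun p : ℝ × ℝ => η p.1 p.2) :
    Continuous fun t => sqNormL2 fun s => deriv (fun u => η u s) t :=
  continuous_sqNormL2 (η := fun t s => deriv (fun u => η u s) t) (continuous_deriv_fst hη)

theorem continuous_curveLength {η : ℝ → ℝ → E} (hη : ContDiff ℝ 1 fun p : ℝ × ℝ => η p.1 p.2) :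
    Continuous fun t => curveLength (η t) :=
  continuous_parametric_intervalIntegral_of_continuous' (continuous_deriv_snd hη).norm 0 1

end NormedSpace

section InnerProductSpace

variable [InnerProductSpace ℝ E]

theorem abs_integral_inner_le_sqrt_mul_sqrt {u w : ℝ → E} {a b : ℝ} (hab : a ≤ b)
    (hu : Continuous u) (hw : Continuous w) :
    |∫ s in a..b, ⟪u s, w s⟫| ≤
      √(∫ s in a..b, ‖u s‖ ^ 2) * √(∫ s in a..b, ‖w s‖ ^ 2) := by
  have hL2 {f : ℝ → E} (hf : Continuous f) :
      MemLp f (ENNReal.ofReal 2) (volume.restrict (Ioc a b)) := by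
    rw [ENNReal.ofReal_ofNat, memLp_two_iff_integrable_sq_norm hf.aestronglyMeasurable]
    exact (hf.norm.pow 2).integrableOn_Ioc
  have hHolder := integral_mul_norm_le_Lp_mul_Lq Real.HolderConjugate.two_two (hL2 hu) (hL2 hw)
  simp only [← integral_of_le hab, rpow_two, ← sqrt_eq_rpow] at hHolder
  calc |∫ s in a..b, ⟪u s, w s⟫| ≤ ∫ s in a..b, ‖u s‖ * ‖w s‖ :=
        (abs_integral_le_integral_abs hab).trans <| integral_mono_on hab
          ((hu.inner hw).abs.intervalIntegrable _ _) ((hu.norm.mul hw.norm).intervalIntegrable _ _)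
          fun s _ => abs_real_inner_le_norm _ _
    _ ≤ _ := hHolder

theorem sqNormL2_le_sq_curveLength_div_two [CompleteSpace E] {γ : ℝ → E} (hγ : Differentiable ℝ γ)
    (hper : Function.Periodic γ 1) (hmean : ∫ s in (0 : ℝ)..1, γ s = 0)
    (hspeed : ∀ s, ‖deriv γ s‖ = curveLength γ) :
    sqNormL2 γ ≤ (curveLength γ / 2) ^ 2 := by
  have hbound (s : ℝ) : ‖γ s‖ ^ 2 ≤ (curveLength γ / 2) ^ 2 := by
    gcongr
    exact norm_le_half_of_periodic_of_integral_eq_zero hγ hper hmean (fun σ => (hspeed σ).le) s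
  calc sqNormL2 γ ≤ ∫ s in (0 : ℝ)..1, (curveLength γ / 2) ^ 2 :=
        integral_mono_on zero_le_one ((hγ.continuous.norm.pow 2).intervalIntegrable _ _)
          intervalIntegrable_const fun s _ => hbound s
    _ = (curveLength γ / 2) ^ 2 := by simp

theorem abs_rpow_sqNormL2_sub_sub_le {η : ℝ → ℝ → E} (hη : ContDiff ℝ 1 fun p : ℝ × ℝ => η p.1 p.2)
    {c : ℝ → E} (hc : Continuous c) {a b p : ℝ} (hab : a ≤ b) (hp : 1 / 2 ≤ p) :
    |sqNormL2 (fun s => η b s - c s) ^ p - sqNormL2 (fun s => η a s - c s) ^ p| ≤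
      2 * p * ∫ t in a..b, sqNormL2 (fun s => η t s - c s) ^ (p - 1 / 2) *
        √(sqNormL2 fun s => deriv (fun u => η u s) t) := by
  have hdiff : Continuous fun q : ℝ × ℝ => η q.1 q.2 - c q.2 :=
    hη.continuous.sub (hc.comp continuous_snd)
  have hvel := continuous_deriv_fst hη
  refine abs_rpow_sub_rpow_le_integral hab hp
    (P := fun t => ∫ s in (0 : ℝ)..1, 2 * ⟪η t s - c s, deriv (fun u => η u s) t⟫)
    (fun t => hasDerivAt_intervalIntegral_of_continuous (hdiff.norm.pow 2)
      (continuous_const.mul (hdiff.inner hvel))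
      (fun t s => ((hasDerivAt_fderiv_apply_fst (hη.differentiable one_ne_zero) t s
        ).differentiableAt.hasDerivAt.sub_const (c s)).norm_sq) 0 1 t)
    (continuous_parametric_intervalIntegral_of_continuous'
      (continuous_const.mul (hdiff.inner hvel)) 0 1)
    (continuous_sqNormL2_deriv_fst hη).sqrt
    (fun t => sqNormL2_nonneg _)
    (fun t => sqrt_nonneg _) fun t _ => ?_
  rw [intervalIntegral.integral_const_mul, abs_mul, abs_two, mul_assoc]
  have hdiff_t : Continuous fun s => η t s - c s :=
    hdiff.comp (continuous_const.prodMk continuous_id)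
  have hvel_t : Continuous fun s => deriv (fun u => η u s) t :=
    hvel.comp (continuous_const.prodMk continuous_id)
  exact mul_le_mul_of_nonneg_left
    (abs_integral_inner_le_sqrt_mul_sqrt zero_le_one hdiff_t hvel_t) zero_le_two

theorem le_riemannianLength_of_forall_le {η : ℝ → ℝ → E}
    (hη : ContDiff ℝ 1 fun p : ℝ × ℝ => η p.1 p.2) (hη₁ : sqNormL2 (fun s => η 1 s - η 0 s) = 1)
    {m : ℝ} (hm : m ≤ 1) (hlong : ∀ t ∈ Icc (0 : ℝ) 1, m ≤ curveLength (η t)) :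
    m ≤ riemannianLength η := by
  refine le_integral_mul_sqrt_of_forall_le hm (continuous_sqNormL2_deriv_fst hη).sqrt
    (fun t => sqrt_nonneg _) (continuous_curveLength hη) hlong ?_
  have h := abs_rpow_sqNormL2_sub_sub_le hη (hη.continuous.uncurry_left 0) zero_le_one le_rfl
  rw [hη₁] at h
  simpa [sqNormL2] using h

theorem le_riemannianLength_of_curveLength_lt {η : ℝ → ℝ → E}
    (hη : ContDiff ℝ 1 fun p : ℝ × ℝ => η p.1 p.2)
    (hpoincare : ∀ t ∈ Icc (0 : ℝ) 1, sqNormL2 (η t) ≤ (curveLength (η t) / 2) ^ 2)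
    {m t₀ : ℝ} (hm : m ≤ 1) (h2m : 2 * m ≤ sqNormL2 (η 0)) (ht₀ : t₀ ∈ Icc (0 : ℝ) 1)
    (hshort : curveLength (η t₀) < m) :
    m ≤ riemannianLength η := by
  have hlength0 (t : ℝ) : 0 ≤ curveLength (η t) :=
    integral_nonneg zero_le_one fun _ _ => norm_nonneg _
  have hm0 : 0 ≤ m := (hlength0 t₀).trans hshort.le
  have hsmall : sqNormL2 (η t₀) ≤ m ^ 2 / 4 :=
    (hpoincare t₀ ht₀).trans (by nlinarith [hlength0 t₀])
  have hdecay := abs_rpow_sqNormL2_sub_sub_le hη continuous_const ht₀.1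
    (by norm_num : (1 : ℝ) / 2 ≤ 3 / 4) (c := 0)
  norm_num at hdecay
  rw [abs_sub_comm] at hdecay
  have hcompare := sqrt_two_mul_integral_rpow_mul_le ht₀ (continuous_sqNormL2 hη.continuous)
    (continuous_sqNormL2_deriv_fst hη).sqrt (continuous_curveLength hη)
    (fun t => sqNormL2_nonneg _) (fun t => sqrt_nonneg _) hlength0 hpoincare
  have : 3 / 2 * m ≤ 3 / 2 * riemannianLength η :=
    calc 3 / 2 * m
        ≤ √2 * (sqNormL2 (η 0) ^ (3 / 4 : ℝ) - sqNormL2 (η t₀) ^ (3 / 4 : ℝ)) :=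
          mul_le_sqrt_two_mul_rpow_sub_rpow hm0 hm h2m (sqNormL2_nonneg _) hsmall
      _ ≤ √2 * (3 / 2 * ∫ t in (0 : ℝ)..t₀, sqNormL2 (η t) ^ (1 / 4 : ℝ) *
            √(sqNormL2 fun s => deriv (fun u => η u s) t)) :=
          mul_le_mul_of_nonneg_left ((le_abs_self _).trans hdecay) (sqrt_nonneg 2)
      _ ≤ 3 / 2 * riemannianLength η := by
          rw [riemannianLength]; linarith
  linarith

end InnerProductSpace

end VectorValued

theorem stmt0 (d : ℕ)
    (η₀ η₁ : ℝ → EuclideanSpace ℝ (Fin d))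
    (L₀ : ℝ)
    (hnorm : (∫ s in (0:ℝ)..1, ‖η₀ s - η₁ s‖ ^ 2) = 1)
    (η : ℝ → ℝ → EuclideanSpace ℝ (Fin d))
    (hC1 : ContDiff ℝ 1 (fun p : ℝ × ℝ => η p.1 p.2))
    (h0 : η 0 = η₀) (h1 : η 1 = η₁)
    (hA : ∀ t ∈ Set.Icc (0:ℝ) 1,
      Function.Periodic (η t) 1 ∧ (∫ s in (0:ℝ)..1, η t s) = 0 ∧
      (0 < ∫ s in (0:ℝ)..1, ‖deriv (η t) s‖) ∧
      ∀ s, ‖deriv (η t) s‖ = ∫ u in (0:ℝ)..1, ‖deriv (η t) u‖) :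
    (1/2) * min (min L₀ (∫ s in (0:ℝ)..1, ‖η₀ s‖ ^ 2)) 2 ≤
      ∫ t in (0:ℝ)..1,
        Real.sqrt (∫ s in (0:ℝ)..1, ‖deriv (fun u => η u s) t‖ ^ 2) *
          Real.sqrt (∫ u in (0:ℝ)..1, ‖deriv (η t) u‖) := by
  subst h0 h1
  set m := (1/2) * min (min L₀ (sqNormL2 (η 0))) 2 with hm
  have hm1 : m ≤ 1 := by linarith [min_le_right (min L₀ (sqNormL2 (η 0))) 2]
  change m ≤ riemannianLength η
  by_cases hlong : ∀ t ∈ Icc (0:ℝ) 1, m ≤ curveLength (η t)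
  · exact le_riemannianLength_of_forall_le hC1 (by simpa [sqNormL2, norm_sub_rev] using hnorm)
      hm1 hlong
  push Not at hlong
  obtain ⟨t₀, ht₀, hshort⟩ := hlong
  have hpoincare (t : ℝ) (ht : t ∈ Icc (0:ℝ) 1) : sqNormL2 (η t) ≤ (curveLength (η t) / 2) ^ 2 :=
    have ⟨hper, hmean, _, hconst⟩ := hA t ht
    sqNormL2_le_sq_curveLength_div_two
      (fun s => (hasDerivAt_fderiv_apply_snd (hC1.differentiable one_ne_zero) t s).differentiableAt)
      hper hmean hconst
  have h2m : 2 * m ≤ sqNormL2 (η 0) := by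
    linarith [min_le_left (min L₀ (sqNormL2 (η 0))) 2, min_le_right L₀ (sqNormL2 (η 0))]
  exact le_riemannianLength_of_curveLength_lt hC1 hpoincare hm1 h2m ht₀ hshort
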